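/- Let M̂ be the latent-augmented MDP of a finite-horizon MDP M along an embedding kernel κ, let π⋆ be a pointwise optimal policy for M, and let π̂⋆ be a pointwise optimal policy for M̂. Then V̂^{π̂⋆}_t(z, s) = V^{π⋆}_t(s) for every 0 ≤ t ≤ T, every z ∈ Z, and every s ∈ S; in particular the optimal augmented value V̂^{π̂⋆}_t(z, s) does not depend on the latent embedding z. -/

import Mathlib

open Finset

/-- A finite-horizon MDP `M = (S, A, T, P, R, μ, γ)` with finite nonempty state space `S`
and finite nonempty action space `A` (nonemptiness is carried as typeclass assumptions
where needed). Probability mass functions on a finite type are represented as nonnegative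
real-valued functions summing to `1`. -/
structure FinMDP (S A : Type) [Fintype S] [Fintype A] where
  T : ℕ
  hT : 1 ≤ T
  P : S → A → S → ℝ
  P_nonneg : ∀ s a s', 0 ≤ P s a s'
  P_sum_one : ∀ s a, ∑ s' : S, P s a s' = 1
  R : S → A → ℝ
  μ : S → ℝ
  μ_nonneg : ∀ s, 0 ≤ μ s
  μ_sum_one : ∑ s : S, μ s = 1
  γ : ℝ
  γ_pos : 0 < γ
  γ_le_one : γ ≤ 1

/-- A policy `π = (π_t)_{0 ≤ t < T}`: for each time `t < T` and state `s`, a probability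
mass function `π_t(s)` on the action space. -/
structure FinPolicy (S A : Type) [Fintype A] (T : ℕ) where
  p : Fin T → S → A → ℝ
  nonneg : ∀ t s a, 0 ≤ p t s a
  sum_one : ∀ t s, ∑ a : A, p t s a = 1

variable {S A Z Z' : Type} [Fintype S] [Fintype A] [Fintype Z] [Fintype Z']

/-- Auxiliary backward recursion, indexed by the number `k` of remaining steps:
`Vaux k s` is the value at time `T - k` in state `s`. -/
noncomputable def FinMDP.Vaux (M : FinMDP S A) (π : FinPolicy S A M.T) : ℕ → S → ℝ
  | 0, _ => 0
  | k + 1, s =>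
      ∑ a : A,
        π.p ⟨M.T - (k + 1), Nat.sub_lt (Nat.lt_of_lt_of_le Nat.one_pos M.hT) (Nat.succ_pos k)⟩
            s a *
          (M.R s a + M.γ * ∑ s' : S, M.P s a s' * M.Vaux π k s')

/-- The value function `V^π_t(s)` (meaningful for `0 ≤ t ≤ T`): `V^π_T(s) = 0` and, for
`t < T`, `V^π_t(s) = ∑_a π_t(s)(a) · (R(s,a) + γ · ∑_{s'} P(s,a)(s') · V^π_{t+1}(s'))`. -/
noncomputable def FinMDP.V (M : FinMDP S A) (π : FinPolicy S A M.T) (t : ℕ) (s : S) : ℝ :=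
  M.Vaux π (M.T - t) s

/-- The expected return `J(π) = ∑_s μ(s) · V^π_0(s)`. -/
noncomputable def FinMDP.J (M : FinMDP S A) (π : FinPolicy S A M.T) : ℝ :=
  ∑ s : S, M.μ s * M.V π 0 s

/-- A policy `π⋆` is pointwise optimal for `M` if `V^{π⋆}_t(s) ≥ V^π_t(s)` for every
policy `π`, every `0 ≤ t ≤ T` and every state `s`. -/
def FinMDP.PointwiseOptimal (M : FinMDP S A) (πs : FinPolicy S A M.T) : Prop :=
  ∀ (π : FinPolicy S A M.T) (t : ℕ), t ≤ M.T → ∀ s : S, M.V π t s ≤ M.V πs t s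


/-- An embedding kernel `κ : S → PMF(Z)` into a finite latent space `Z`. -/
structure FinKernel (S Z : Type) [Fintype Z] where
  k : S → Z → ℝ
  nonneg : ∀ s z, 0 ≤ k s z
  sum_one : ∀ s, ∑ z : Z, k s z = 1

/-- The latent-augmented MDP `M̂` of `M` along the embedding kernel `κ`: state space `Z × S`,
initial distribution `μ̂(z,s) = μ(s)·κ(s)(z)`, transitions
`P̂((z,s),a)(z',s') = P(s,a)(s')·κ(s')(z')`, reward `R̂((z,s),a) = R(s,a)`. -/
noncomputable def FinMDP.latentAug (M : FinMDP S A) (κ : FinKernel S Z) :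
    FinMDP (Z × S) A where
  T := M.T
  hT := M.hT
  P := fun x a y => M.P x.2 a y.2 * κ.k y.2 y.1
  P_nonneg := fun _ _ _ => mul_nonneg (M.P_nonneg _ _ _) (κ.nonneg _ _)
  P_sum_one := by
    intro x a
    rw [Fintype.sum_prod_type, Finset.sum_comm]
    calc ∑ s' : S, ∑ z' : Z, M.P x.2 a s' * κ.k s' z'
        = ∑ s' : S, M.P x.2 a s' * ∑ z' : Z, κ.k s' z' := by simp [Finset.mul_sum]
      _ = 1 := by simp [κ.sum_one, M.P_sum_one]
  R := fun x a => M.R x.2 a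
  μ := fun x => M.μ x.2 * κ.k x.2 x.1
  μ_nonneg := fun _ => mul_nonneg (M.μ_nonneg _) (κ.nonneg _ _)
  μ_sum_one := by
    rw [Fintype.sum_prod_type, Finset.sum_comm]
    calc ∑ s : S, ∑ z : Z, M.μ s * κ.k s z
        = ∑ s : S, M.μ s * ∑ z : Z, κ.k s z := by simp [Finset.mul_sum]
      _ = 1 := by simp [κ.sum_one, M.μ_sum_one]
  γ := M.γ
  γ_pos := M.γ_pos
  γ_le_one := M.γ_le_one

/-- The lift `π↑` of a policy `π` of `M` to the latent-augmented MDP: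
`π↑_t(z, s) = π_t(s)`. -/
def FinPolicy.lift {T : ℕ} (Z : Type) (π : FinPolicy S A T) : FinPolicy (Z × S) A T where
  p t x a := π.p t x.2 a
  nonneg := fun t x a => π.nonneg t x.2 a
  sum_one := fun t x => π.sum_one t x.2

/-- The marginalization `π̄` of a policy `π̂` of the latent-augmented MDP:
`π̄_t(s)(a) = ∑_z κ(s)(z) · π̂_t(z, s)(a)`. -/
noncomputable def FinKernel.marg {T : ℕ} (κ : FinKernel S Z) (π : FinPolicy (Z × S) A T) :
    FinPolicy S A T where
  p t s a := ∑ z : Z, κ.k s z * π.p t (z, s) a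
  nonneg := fun t s a =>
    Finset.sum_nonneg fun z _ => mul_nonneg (κ.nonneg _ _) (π.nonneg _ _ _)
  sum_one := by
    intro t s
    rw [Finset.sum_comm]
    calc ∑ z : Z, ∑ a : A, κ.k s z * π.p t (z, s) a
        = ∑ z : Z, κ.k s z * ∑ a : A, π.p t (z, s) a := by simp [Finset.mul_sum]
      _ = 1 := by simp [π.sum_one, κ.sum_one]

section AuxLemmas

open scoped Classical

variable {S A Z : Type} [Fintype S] [Fintype A] [Fintype Z]

lemma Vaux_lift (M : FinMDP S A) (κ : FinKernel S Z) (π : FinPolicy S A M.T) :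
    ∀ (k : ℕ) (z : Z) (s : S),
      (M.latentAug κ).Vaux (π.lift Z) k (z, s) = M.Vaux π k s := by
  intro k
  induction k with
  | zero => intro z s; rfl
  | succ k ih =>
      intro z s
      rw [show (M.latentAug κ).Vaux (π.lift Z) (k+1) (z,s) =
        ∑ a : A, π.p ⟨M.T - (k+1), Nat.sub_lt (Nat.lt_of_lt_of_le Nat.one_pos M.hT)
            (Nat.succ_pos k)⟩ s a *
          (M.R s a + M.γ * ∑ y : Z × S,
            (M.P s a y.2 * κ.k y.2 y.1) * (M.latentAug κ).Vaux (π.lift Z) k y) from rfl,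
        FinMDP.Vaux]
      refine Finset.sum_congr rfl fun a _ => ?_
      have h1 : ∑ y : Z × S,
          (M.P s a y.2 * κ.k y.2 y.1) * (M.latentAug κ).Vaux (π.lift Z) k y
          = ∑ s' : S, M.P s a s' * M.Vaux π k s' := by
        rw [Fintype.sum_prod_type_right]
        refine Finset.sum_congr rfl fun s' _ => ?_
        have : ∀ z' : Z, (M.P s a s' * κ.k s' z') * (M.latentAug κ).Vaux (π.lift Z) k (z', s')
            = (M.P s a s' * κ.k s' z') * M.Vaux π k s' := fun z' => by rw [ih z' s']
        rw [Finset.sum_congr rfl fun z' _ => this z', ← Finset.sum_mul, ← Finset.mul_sum,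
          κ.sum_one, mul_one]
      rw [h1]

/-- `π` modified to play `a0` deterministically at time `t0`. -/
noncomputable def FinPolicy.modify {T : ℕ} (π : FinPolicy S A T) (t0 : Fin T) (a0 : A) :
    FinPolicy S A T where
  p t s a := if t = t0 then (if a = a0 then 1 else 0) else π.p t s a
  nonneg := by
    intro t s a
    split_ifs
    · norm_num
    · norm_num
    · exact π.nonneg _ _ _
  sum_one := by
    intro t s
    by_cases h : t = t0
    · simp [h]
    · simp [h, π.sum_one]

lemma Vaux_modify_eq (M : FinMDP S A) (π : FinPolicy S A M.T)
    (t0 : Fin M.T) (a0 : A) :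
    ∀ (j : ℕ), j + t0.1 + 1 ≤ M.T → ∀ s : S,
      M.Vaux (π.modify t0 a0) j s = M.Vaux π j s := by
  intro j
  induction j with
  | zero => intro _ _; rfl
  | succ j ih =>
      intro hj s
      rw [FinMDP.Vaux, FinMDP.Vaux]
      refine Finset.sum_congr rfl fun a _ => ?_
      have hne : (⟨M.T - (j+1), Nat.sub_lt (Nat.lt_of_lt_of_le Nat.one_pos M.hT)
          (Nat.succ_pos j)⟩ : Fin M.T) ≠ t0 := by
        intro h
        have := congrArg Fin.val h
        simp only [Fin.val_mk] at this
        omega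
      have hp : (π.modify t0 a0).p ⟨M.T - (j+1), Nat.sub_lt
          (Nat.lt_of_lt_of_le Nat.one_pos M.hT) (Nat.succ_pos j)⟩ s a =
          π.p ⟨M.T - (j+1), Nat.sub_lt (Nat.lt_of_lt_of_le Nat.one_pos M.hT)
          (Nat.succ_pos j)⟩ s a := by
        simp only [FinPolicy.modify]
        exact if_neg hne
      rw [hp]
      have h2 : ∑ s' : S, M.P s a s' * M.Vaux (π.modify t0 a0) j s'
          = ∑ s' : S, M.P s a s' * M.Vaux π j s' :=
        Finset.sum_congr rfl fun s' _ => by rw [ih (by omega) s']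
      rw [h2]

/-- Bellman-type inequality for a pointwise optimal policy. -/
lemma bellman_opt (M : FinMDP S A) (πstar : FinPolicy S A M.T)
    (hstar : M.PointwiseOptimal πstar) :
    ∀ (k : ℕ), k + 1 ≤ M.T → ∀ (s : S) (a : A),
      M.R s a + M.γ * ∑ s' : S, M.P s a s' * M.Vaux πstar k s' ≤ M.Vaux πstar (k+1) s := by
  intro k hk s a
  set t0 : Fin M.T := ⟨M.T - (k+1), Nat.sub_lt (Nat.lt_of_lt_of_le Nat.one_pos M.hT)
    (Nat.succ_pos k)⟩ with ht0
  set π' := πstar.modify t0 a with hπ'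
  have ht0v : t0.1 = M.T - (k+1) := rfl
  have hVk : ∀ s' : S, M.Vaux π' k s' = M.Vaux πstar k s' := fun s' =>
    Vaux_modify_eq M πstar t0 a k (by omega) s'
  have hVk1 : M.Vaux π' (k+1) s =
      M.R s a + M.γ * ∑ s' : S, M.P s a s' * M.Vaux πstar k s' := by
    rw [FinMDP.Vaux]
    have hp : ∀ b : A, π'.p ⟨M.T - (k+1), Nat.sub_lt
        (Nat.lt_of_lt_of_le Nat.one_pos M.hT) (Nat.succ_pos k)⟩ s b =
        if b = a then 1 else 0 := by
      intro b
      simp only [hπ', FinPolicy.modify]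
      exact if_pos rfl
    rw [Finset.sum_eq_single a
      (fun b _ hb => by rw [hp b, if_neg hb, zero_mul])
      (fun h => absurd (Finset.mem_univ a) h)]
    rw [hp a, if_pos rfl, one_mul]
    have h2 : ∑ s' : S, M.P s a s' * M.Vaux π' k s'
        = ∑ s' : S, M.P s a s' * M.Vaux πstar k s' :=
      Finset.sum_congr rfl fun s' _ => by rw [hVk s']
    rw [h2]
  have hle := hstar π' (M.T - (k+1)) (Nat.sub_le _ _) s
  rw [FinMDP.V, FinMDP.V, Nat.sub_sub_self hk] at hle
  calc M.R s a + M.γ * ∑ s' : S, M.P s a s' * M.Vaux πstar k s'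
      = M.Vaux π' (k+1) s := hVk1.symm
    _ ≤ M.Vaux πstar (k+1) s := hle

lemma Vaux_hat_le (M : FinMDP S A) (κ : FinKernel S Z)
    (πstar : FinPolicy S A M.T) (hstar : M.PointwiseOptimal πstar)
    (πhat : FinPolicy (Z × S) A M.T) :
    ∀ (k : ℕ), k ≤ M.T → ∀ (z : Z) (s : S),
      (M.latentAug κ).Vaux πhat k (z, s) ≤ M.Vaux πstar k s := by
  intro k
  induction k with
  | zero => intro _ _ _; exact le_refl 0
  | succ k ih =>
      intro hk z s
      have hk' : k ≤ M.T := le_trans (Nat.le_succ k) hk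
      rw [show (M.latentAug κ).Vaux πhat (k+1) (z,s) =
        ∑ a : A, πhat.p ⟨M.T - (k+1), Nat.sub_lt (Nat.lt_of_lt_of_le Nat.one_pos M.hT)
            (Nat.succ_pos k)⟩ (z, s) a *
          (M.R s a + M.γ * ∑ y : Z × S,
            (M.P s a y.2 * κ.k y.2 y.1) * (M.latentAug κ).Vaux πhat k y) from rfl]
      have key : ∀ a : A,
          M.R s a + M.γ * ∑ y : Z × S,
            (M.P s a y.2 * κ.k y.2 y.1) * (M.latentAug κ).Vaux πhat k y
          ≤ M.Vaux πstar (k+1) s := by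
        intro a
        refine le_trans ?_ (bellman_opt M πstar hstar k hk s a)
        have hinner : ∑ y : Z × S,
            (M.P s a y.2 * κ.k y.2 y.1) * (M.latentAug κ).Vaux πhat k y
            ≤ ∑ s' : S, M.P s a s' * M.Vaux πstar k s' := by
          rw [Fintype.sum_prod_type_right]
          refine Finset.sum_le_sum fun s' _ => ?_
          calc ∑ z' : Z, (M.P s a s' * κ.k s' z') * (M.latentAug κ).Vaux πhat k (z', s')
              ≤ ∑ z' : Z, (M.P s a s' * κ.k s' z') * M.Vaux πstar k s' := by
                refine Finset.sum_le_sum fun z' _ => ?_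
                exact mul_le_mul_of_nonneg_left (ih hk' z' s')
                  (mul_nonneg (M.P_nonneg _ _ _) (κ.nonneg _ _))
            _ = M.P s a s' * M.Vaux πstar k s' := by
                rw [← Finset.sum_mul, ← Finset.mul_sum, κ.sum_one, mul_one]
        have hγ : (0:ℝ) ≤ M.γ := le_of_lt M.γ_pos
        linarith [mul_le_mul_of_nonneg_left hinner hγ]
      calc ∑ a : A, πhat.p ⟨M.T - (k+1), Nat.sub_lt (Nat.lt_of_lt_of_le Nat.one_pos M.hT)
              (Nat.succ_pos k)⟩ (z, s) a *
            (M.R s a + M.γ * ∑ y : Z × S,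
              (M.P s a y.2 * κ.k y.2 y.1) * (M.latentAug κ).Vaux πhat k y)
          ≤ ∑ a : A, πhat.p ⟨M.T - (k+1), Nat.sub_lt (Nat.lt_of_lt_of_le Nat.one_pos M.hT)
              (Nat.succ_pos k)⟩ (z, s) a * M.Vaux πstar (k+1) s := by
            refine Finset.sum_le_sum fun a _ => ?_
            exact mul_le_mul_of_nonneg_left (key a) (πhat.nonneg _ _ _)
        _ = M.Vaux πstar (k+1) s := by
            rw [← Finset.sum_mul, πhat.sum_one, one_mul]

end AuxLemmas

/-- `V̂^{π̂⋆}_t(z, s) = V^{π⋆}_t(s)` for every `0 ≤ t ≤ T`, `z ∈ Z`, `s ∈ S`; in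
particular the optimal augmented value does not depend on the latent embedding `z`. -/
theorem stmt_13 [Nonempty S] [Nonempty A] [Nonempty Z]
    (M : FinMDP S A) (κ : FinKernel S Z)
    (πstar : FinPolicy S A M.T) (hstar : M.PointwiseOptimal πstar)
    (πhatstar : FinPolicy (Z × S) A M.T)
    (hhatstar : (M.latentAug κ).PointwiseOptimal πhatstar) :
    ∀ (t : ℕ), t ≤ M.T → ∀ (z : Z) (s : S),
      (M.latentAug κ).V πhatstar t (z, s) = M.V πstar t s := by
  intro t ht z s
  refine le_antisymm ?_ ?_
  · exact Vaux_hat_le M κ πstar hstar πhatstar (M.T - t) (Nat.sub_le _ _) z s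
  · have h1 := hhatstar (πstar.lift Z) t ht (z, s)
    have h2 : (M.latentAug κ).V (πstar.lift Z) t (z, s) = M.V πstar t s := by
      unfold FinMDP.V
      exact Vaux_lift M κ πstar (M.T - t) z s
    rw [← h2]
    exact h1
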